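/- arXiv:1902.08952 — 2 statements merged into one kernel-verified Lean document; each statement's English description precedes it below -/
import Mathlib

section
/- Let γ: ℝ² → ℝ² be the evolution by isothermal gauge of C¹ × C⁰ initial data (c,v), with ϑ a continuous lift of the unit tangent U₀ along c. Suppose that for some s₁ < s₂, sup_{r₁,r₂ ∈ [s₁,s₂]} |ϑ(r₂) − ϑ(r₁)|² + sup_{r ∈ [s₁,s₂]} |v(r)|² < 1. Then a_+(ξ) ≠ a_-(η) for all ξ, η ∈ [s₁,s₂], and consequently γ_s(s,t) ≠ 0 for every (s,t) in the characteristic diamond D(s₁,s₂). -/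
/-!
Write `ċ = m • e(ϑ)` with `m = |ċ|` and `e(θ) = (cos θ, sin θ)`. If `a₊(ξ) = a₋(η)`, pairing with
`e(ϑ ξ)` gives `m(ξ) = ⟨v η, e(ϑ ξ)⟩ - m(η) cos (ϑ ξ - ϑ η)`. Since `v η ⊥ e(ϑ η)` and `|v η| ≤ 1`, the
first term is at most `|sin (ϑ ξ - ϑ η)| ≤ |ϑ ξ - ϑ η|`, and the smallness hypothesis makes
`|ϑ ξ - ϑ η| < m(ξ) ≤ 1`, so the cosine is positive: a contradiction. By d'Alembert's formula
`γ_s(s,t) = (a₊(s+t) - a₋(s-t)) / 2`, and both arguments lie in `[s₁, s₂]` on the diamond.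
-/

noncomputable section
open Real Set Filter MeasureTheory
open scoped ContDiff ENNReal

/-- Euclidean inner product on ℝ². -/
def dot2 (a b : ℝ × ℝ) : ℝ := a.1 * b.1 + a.2 * b.2
/-- Squared Euclidean norm on ℝ². -/
def nsq (a : ℝ × ℝ) : ℝ := dot2 a a
/-- Euclidean norm on ℝ². -/
def enorm2 (a : ℝ × ℝ) : ℝ := Real.sqrt (nsq a)

/-- d'Alembert's formula: the evolution by isothermal gauge of initial data (c,v),
γ(s,t) = (1/2)(c(s+t) + c(s−t) + ∫_{s−t}^{s+t} v). -/
def gammaIG (c v : ℝ → ℝ × ℝ) (p : ℝ × ℝ) : ℝ × ℝ :=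
  (1 / 2 : ℝ) • (c (p.1 + p.2) + c (p.1 - p.2) + ∫ ζ in (p.1 - p.2)..(p.1 + p.2), v ζ)

/-- Partial derivative in s of a map ℝ² → ℝ². -/
def pds (γ : ℝ × ℝ → ℝ × ℝ) (p : ℝ × ℝ) : ℝ × ℝ := deriv (fun x => γ (x, p.2)) p.1
/-- Partial derivative in t of a map ℝ² → ℝ². -/
def pdt (γ : ℝ × ℝ → ℝ × ℝ) (p : ℝ × ℝ) : ℝ × ℝ := deriv (fun y => γ (p.1, y)) p.2

/-- Spatial direction a₊ = v + ċ of the outgoing null tangent. -/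
def aplus (c v : ℝ → ℝ × ℝ) (s : ℝ) : ℝ × ℝ := v s + deriv c s
/-- Spatial direction a₋ = v − ċ of the incoming null tangent. -/
def aminus (c v : ℝ → ℝ × ℝ) (s : ℝ) : ℝ × ℝ := v s - deriv c s

/-- The characteristic diamond D(s₁,s₂) = {(s,t) : s₁ + |t| ≤ s ≤ s₂ − |t|}. -/
def diamond (s₁ s₂ : ℝ) : Set (ℝ × ℝ) :=
  {p : ℝ × ℝ | s₁ + |p.2| ≤ p.1 ∧ p.1 ≤ s₂ - |p.2|}

/-- Admissible C¹ × C⁰ initial data for the isothermal gauge: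
⟨ċ,v⟩ = 0, |ċ|² + |v|² = 1 and |v| < 1. -/
structure IGData (c v : ℝ → ℝ × ℝ) : Prop where
  hc : ContDiff ℝ 1 c
  hv : Continuous v
  horth : ∀ s, dot2 (deriv c s) (v s) = 0
  hnorm : ∀ s, nsq (deriv c s) + nsq (v s) = 1
  hvlt : ∀ s, nsq (v s) < 1

/-- ϑ is a continuous lift of the unit tangent U₀ = ċ/|ċ| along c. -/
def IsTangentLift (c : ℝ → ℝ × ℝ) (ϑ : ℝ → ℝ) : Prop :=
  Continuous ϑ ∧
    ∀ s, (enorm2 (deriv c s))⁻¹ • deriv c s = ((Real.cos (ϑ s), Real.sin (ϑ s)) : ℝ × ℝ)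

def unitVec (θ : ℝ) : ℝ × ℝ := (cos θ, sin θ)

lemma nsq_nonneg (a : ℝ × ℝ) : 0 ≤ nsq a :=
  add_nonneg (mul_self_nonneg _) (mul_self_nonneg _)

lemma dot2_smul_left (r : ℝ) (a b : ℝ × ℝ) : dot2 (r • a) b = r * dot2 a b := by
  simp only [dot2, Prod.smul_fst, Prod.smul_snd, smul_eq_mul]; ring

lemma dot2_smul_right (r : ℝ) (a b : ℝ × ℝ) : dot2 a (r • b) = r * dot2 a b := by
  simp only [dot2, Prod.smul_fst, Prod.smul_snd, smul_eq_mul]; ring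

lemma dot2_add_right (a b b' : ℝ × ℝ) : dot2 a (b + b') = dot2 a b + dot2 a b' := by
  simp only [dot2, Prod.fst_add, Prod.snd_add]; ring

lemma dot2_sub_right (a b b' : ℝ × ℝ) : dot2 a (b - b') = dot2 a b - dot2 a b' := by
  simp only [dot2, Prod.fst_sub, Prod.snd_sub]; ring

lemma dot2_unitVec_unitVec (α β : ℝ) : dot2 (unitVec α) (unitVec β) = cos (α - β) := by
  simp only [dot2, unitVec, cos_sub]

lemma dot2_unitVec_sq_of_dot2_unitVec_eq_zero {w : ℝ × ℝ} {β : ℝ}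
    (hw : dot2 (unitVec β) w = 0) (α : ℝ) :
    dot2 (unitVec α) w ^ 2 = nsq w * sin (α - β) ^ 2 := by
  simp only [dot2, unitVec] at hw
  have hβ := sin_sq_add_cos_sq β
  -- `w` is a multiple of the normal `(-sin β, cos β)`
  set n := -w.1 * sin β + w.2 * cos β
  have h1 : w.1 = -(n * sin β) := by linear_combination cos β * hw - w.1 * hβ
  have h2 : w.2 = n * cos β := by linear_combination sin β * hw - w.2 * hβ
  simp only [nsq, dot2, unitVec, sin_sub, h1, h2]
  linear_combination (-n ^ 2 * (sin α * cos β - cos α * sin β) ^ 2) * hβ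

lemma dot2_unitVec_le_of_dot2_unitVec_eq_zero {w : ℝ × ℝ} {β : ℝ}
    (hw : dot2 (unitVec β) w = 0) (hw1 : nsq w ≤ 1) (α : ℝ) :
    dot2 (unitVec α) w ≤ |α - β| := by
  have hsq : dot2 (unitVec α) w ^ 2 ≤ (α - β) ^ 2 :=
    calc dot2 (unitVec α) w ^ 2 = nsq w * sin (α - β) ^ 2 :=
          dot2_unitVec_sq_of_dot2_unitVec_eq_zero hw α
      _ ≤ 1 * sin (α - β) ^ 2 := by gcongr
      _ ≤ (α - β) ^ 2 := by
          rw [one_mul, ← sq_abs, ← sq_abs (α - β)]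
          exact pow_le_pow_left₀ (abs_nonneg _) abs_sin_le_abs 2
  exact (le_abs_self _).trans (sq_le_sq.1 hsq)

lemma add_smul_unitVec_ne_sub_smul_unitVec {w w' : ℝ × ℝ} {α β m m' : ℝ}
    (hw : dot2 (unitVec α) w = 0) (hw' : dot2 (unitVec β) w' = 0) (hw'1 : nsq w' ≤ 1)
    (hm : |α - β| < m) (hm' : 0 ≤ m') (hcos : 0 ≤ cos (α - β)) :
    w + m • unitVec α ≠ w' - m' • unitVec β := by
  intro h
  have hpair := congrArg (dot2 (unitVec α)) h
  rw [dot2_add_right, dot2_sub_right, dot2_smul_right, dot2_smul_right, hw,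
    dot2_unitVec_unitVec, dot2_unitVec_unitVec, sub_self, cos_zero] at hpair
  linarith [dot2_unitVec_le_of_dot2_unitVec_eq_zero hw' hw'1 α, mul_nonneg hm' hcos]

namespace IGData

variable {c v : ℝ → ℝ × ℝ} {ϑ : ℝ → ℝ}

lemma enorm2_deriv_pos (hdata : IGData c v) (s : ℝ) : 0 < enorm2 (deriv c s) :=
  sqrt_pos.2 (by linarith [hdata.hnorm s, hdata.hvlt s])

lemma enorm2_deriv_sq_add_nsq (hdata : IGData c v) (s : ℝ) :
    enorm2 (deriv c s) ^ 2 + nsq (v s) = 1 := by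
  rw [enorm2, sq_sqrt (nsq_nonneg _)]; exact hdata.hnorm s

lemma deriv_eq_smul_unitVec (hdata : IGData c v) (hlift : IsTangentLift c ϑ) (s : ℝ) :
    deriv c s = enorm2 (deriv c s) • unitVec (ϑ s) := by
  rw [unitVec, ← hlift.2 s, smul_smul, mul_inv_cancel₀ (hdata.enorm2_deriv_pos s).ne', one_smul]

lemma dot2_unitVec_eq_zero (hdata : IGData c v) (hlift : IsTangentLift c ϑ) (s : ℝ) :
    dot2 (unitVec (ϑ s)) (v s) = 0 := by
  have h := hdata.horth s
  rw [hdata.deriv_eq_smul_unitVec hlift s, dot2_smul_left] at h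
  exact (mul_eq_zero.1 h).resolve_left (hdata.enorm2_deriv_pos s).ne'

lemma aplus_ne_aminus (hdata : IGData c v) (hlift : IsTangentLift c ϑ) {ξ η : ℝ}
    (hsmall : |ϑ ξ - ϑ η| ^ 2 + nsq (v ξ) < 1) : aplus c v ξ ≠ aminus c v η := by
  have hspeed := hdata.enorm2_deriv_sq_add_nsq ξ
  have hpos := hdata.enorm2_deriv_pos ξ
  have hm : |ϑ ξ - ϑ η| < enorm2 (deriv c ξ) := by
    apply lt_of_pow_lt_pow_left₀ 2 hpos.le; linarith
  have hm1 : enorm2 (deriv c ξ) ≤ 1 := by nlinarith [nsq_nonneg (v ξ)]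
  have hcos : 0 ≤ cos (ϑ ξ - ϑ η) := by
    have hπ : |ϑ ξ - ϑ η| ≤ π / 2 := by linarith [pi_gt_three]
    exact cos_nonneg_of_mem_Icc (abs_le.1 hπ)
  rw [aplus, aminus, hdata.deriv_eq_smul_unitVec hlift ξ, hdata.deriv_eq_smul_unitVec hlift η]
  exact add_smul_unitVec_ne_sub_smul_unitVec (hdata.dot2_unitVec_eq_zero hlift ξ)
    (hdata.dot2_unitVec_eq_zero hlift η) (hdata.hvlt η).le hm (hdata.enorm2_deriv_pos η).le hcos

end IGData

lemma hasDerivAt_gammaIG_fst {c v : ℝ → ℝ × ℝ} (hc : Differentiable ℝ c) (hv : Continuous v)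
    (x t : ℝ) :
    HasDerivAt (fun y => gammaIG c v (y, t))
      ((1 / 2 : ℝ) • (aplus c v (x + t) - aminus c v (x - t))) x := by
  set F : ℝ → ℝ × ℝ := fun u => ∫ ζ in (0 : ℝ)..u, v ζ
  have hF (u : ℝ) : HasDerivAt F (v u) u := (hv.integral_hasStrictDerivAt 0 u).hasDerivAt
  have hγ : (fun y => gammaIG c v (y, t)) =
      fun y => (1 / 2 : ℝ) • (c (y + t) + c (y - t) + (F (y + t) - F (y - t))) := by
    funext y
    simp only [gammaIG, F, intervalIntegral.integral_interval_sub_left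
      (hv.intervalIntegrable _ _) (hv.intervalIntegrable _ _)]
  have hadd := (hasDerivAt_id' x).add_const t
  have hsub := (hasDerivAt_id' x).sub_const t
  rw [hγ]
  have hsum := (((hc (x + t)).hasDerivAt.scomp x hadd).add
    ((hc (x - t)).hasDerivAt.scomp x hsub)).add
    (((hF (x + t)).scomp x hadd).sub ((hF (x - t)).scomp x hsub))
  refine (hsum.const_smul (1 / 2 : ℝ)).congr_deriv ?_
  simp only [aplus, aminus, one_smul]
  module

lemma mem_Icc_of_mem_diamond {s₁ s₂ : ℝ} {p : ℝ × ℝ} (hp : p ∈ diamond s₁ s₂) :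
    p.1 + p.2 ∈ Set.Icc s₁ s₂ ∧ p.1 - p.2 ∈ Set.Icc s₁ s₂ := by
  obtain ⟨h₁, h₂⟩ := hp
  have := le_abs_self p.2
  have := neg_abs_le p.2
  exact ⟨⟨by linarith, by linarith⟩, ⟨by linarith, by linarith⟩⟩

theorem no_singularity_in_diamond_general
    (c v : ℝ → ℝ × ℝ) (hdata : IGData c v)
    (ϑ : ℝ → ℝ) (hlift : IsTangentLift c ϑ)
    (s₁ s₂ : ℝ)
    (hsmall : ∀ r₁ ∈ Set.Icc s₁ s₂, ∀ r₂ ∈ Set.Icc s₁ s₂, ∀ r ∈ Set.Icc s₁ s₂,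
      |ϑ r₂ - ϑ r₁| ^ 2 + nsq (v r) < 1) :
    (∀ ξ ∈ Set.Icc s₁ s₂, ∀ η ∈ Set.Icc s₁ s₂, aplus c v ξ ≠ aminus c v η) ∧
    ∀ p ∈ diamond s₁ s₂, pds (gammaIG c v) p ≠ 0 := by
  have hnull : ∀ ξ ∈ Set.Icc s₁ s₂, ∀ η ∈ Set.Icc s₁ s₂, aplus c v ξ ≠ aminus c v η :=
    fun ξ hξ η hη => hdata.aplus_ne_aminus hlift (hsmall η hη ξ hξ ξ hξ)
  refine ⟨hnull, fun p hp hzero => ?_⟩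
  obtain ⟨hplus, hminus⟩ := mem_Icc_of_mem_diamond hp
  rw [pds, (hasDerivAt_gammaIG_fst (hdata.hc.differentiable one_ne_zero) hdata.hv p.1 p.2).deriv,
    smul_eq_zero, sub_eq_zero] at hzero
  exact hzero.elim (by norm_num) (hnull _ hplus _ hminus)

/-- A smallness condition on the oscillation of the tangent angle
and on the initial velocity over [s₁,s₂] rules out singularities in the
characteristic diamond D(s₁,s₂). -/
theorem no_singularity_in_diamond
    (c v : ℝ → ℝ × ℝ) (hdata : IGData c v)
    (ϑ : ℝ → ℝ) (hlift : IsTangentLift c ϑ)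
    (s₁ s₂ : ℝ) (hlt : s₁ < s₂)
    (hsmall : ∀ r₁ ∈ Set.Icc s₁ s₂, ∀ r₂ ∈ Set.Icc s₁ s₂, ∀ r ∈ Set.Icc s₁ s₂,
      |ϑ r₂ - ϑ r₁| ^ 2 + nsq (v r) < 1) :
    (∀ ξ ∈ Set.Icc s₁ s₂, ∀ η ∈ Set.Icc s₁ s₂, aplus c v ξ ≠ aminus c v η) ∧
    ∀ p ∈ diamond s₁ s₂, pds (gammaIG c v) p ≠ 0 :=
  no_singularity_in_diamond_general c v hdata ϑ hlift s₁ s₂ hsmall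
end
end

section
/- Evolution of a straight line: let c(s) = (c¹(s), 0) where c¹: ℝ → ℝ is smooth with (c¹)'(s) > 0 for all s and c¹(s) → ±∞ as s → ±∞, and let v(s) = (0, v²(s)) with v² smooth and (c¹)'(s)² + v²(s)² = 1 for all s (so that (c,v) is admissible initial data for the isothermal gauge). Then the evolution by isothermal gauge γ of (c,v) satisfies γ_s(s,t) ≠ 0 for every (s,t) ∈ ℝ²; hence φ(s,t) = (t, γ(s,t)) is a smooth proper timelike immersion with vanishing mean curvature whose image contains the straight line {(0, x¹, 0) : x¹ ∈ ℝ}. -/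
noncomputable section
open Real Set Filter MeasureTheory
open scoped ContDiff ENNReal

/-- Second partial derivatives. -/
def pdss (γ : ℝ × ℝ → ℝ × ℝ) (p : ℝ × ℝ) : ℝ × ℝ := deriv (fun x => pds γ (x, p.2)) p.1
def pdtt (γ : ℝ × ℝ → ℝ × ℝ) (p : ℝ × ℝ) : ℝ × ℝ := deriv (fun y => pdt γ (p.1, y)) p.2

/-! γ is d'Alembert's solution γ(s,t) = F(s+t) + G(s−t) with F' = a₊/2 and G' = −a₋/2, so
γ_s = (a₊(s+t) − a₋(s−t))/2 and γ_t = (a₊(s+t) + a₋(s−t))/2. The constraints on (c,v) make a₊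
and a₋ unit vectors, hence |γ_s|² + |γ_t|² = 1 and ⟨γ_s,γ_t⟩ = 0, and the timelike determinant is
−|γ_s|⁴. For the straight line, the first component of γ_s is (ċ¹(s+t) + ċ¹(s−t))/2 > 0, and
γ¹(s,t) = (c¹(s+t) + c¹(s−t))/2 cannot stay bounded as s → ±∞ with t bounded, which gives
properness. -/

def antideriv (v : ℝ → ℝ × ℝ) (x : ℝ) : ℝ × ℝ := ∫ ζ in (0 : ℝ)..x, v ζ

def dAlembert (f g : ℝ → ℝ × ℝ) (p : ℝ × ℝ) : ℝ × ℝ := f (p.1 + p.2) + g (p.1 - p.2)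

section Primitive

variable {v : ℝ → ℝ × ℝ}

theorem hasDerivAt_antideriv (hv : Continuous v) (x : ℝ) : HasDerivAt (antideriv v) (v x) x :=
  intervalIntegral.integral_hasDerivAt_right (hv.intervalIntegrable _ _)
    hv.aestronglyMeasurable.stronglyMeasurableAtFilter hv.continuousAt

theorem deriv_antideriv (hv : Continuous v) : deriv (antideriv v) = v :=
  funext fun x => (hasDerivAt_antideriv hv x).deriv

theorem contDiff_antideriv {n : ℕ∞} (hv : ContDiff ℝ n v) : ContDiff ℝ n (antideriv v) := by
  have h : ContDiff ℝ (n + 1) (antideriv v) :=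
    contDiff_succ_iff_deriv.2 ⟨fun x => (hasDerivAt_antideriv hv.continuous x).differentiableAt,
      by simp, by rwa [deriv_antideriv hv.continuous]⟩
  exact h.of_le (by exact_mod_cast le_self_add)

end Primitive

section DAlembert

variable {f g : ℝ → ℝ × ℝ}

theorem pds_dAlembert (hf : Differentiable ℝ f) (hg : Differentiable ℝ g) :
    pds (dAlembert f g) = dAlembert (deriv f) (deriv g) :=
  funext fun p =>
    (((hf _).hasDerivAt.comp_add_const p.1 p.2).add
      ((hg _).hasDerivAt.comp_sub_const p.1 p.2)).deriv

theorem pdt_dAlembert (hf : Differentiable ℝ f) (hg : Differentiable ℝ g) :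
    pdt (dAlembert f g) = dAlembert (deriv f) (-deriv g) :=
  funext fun p =>
    (((hf _).hasDerivAt.comp_const_add p.1 p.2).add
      ((hg _).hasDerivAt.comp_const_sub p.1 p.2)).deriv

theorem pdtt_dAlembert (hf : Differentiable ℝ f) (hg : Differentiable ℝ g)
    (hf' : Differentiable ℝ (deriv f)) (hg' : Differentiable ℝ (deriv g)) :
    pdtt (dAlembert f g) = pdss (dAlembert f g) := by
  change pdt (pdt _) = pds (pds _)
  rw [pdt_dAlembert hf hg, pdt_dAlembert hf' hg'.neg, pds_dAlembert hf hg,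
    pds_dAlembert hf' hg', deriv.neg']
  congr 1
  funext x
  simp

theorem ContDiff.dAlembert {n : WithTop ℕ∞} (hf : ContDiff ℝ n f) (hg : ContDiff ℝ n g) :
    ContDiff ℝ n (dAlembert f g) :=
  (hf.comp (contDiff_fst.add contDiff_snd)).add (hg.comp (contDiff_fst.sub contDiff_snd))

end DAlembert

theorem fst_intervalIntegral {E F : Type*} [NormedAddCommGroup E] [NormedSpace ℝ E]
    [CompleteSpace E] [NormedAddCommGroup F] [NormedSpace ℝ F] [CompleteSpace F]
    {f : ℝ → E × F} {a b : ℝ} (hf : IntervalIntegrable f volume a b) :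
    (∫ ζ in a..b, f ζ).1 = ∫ ζ in a..b, (f ζ).1 :=
  ((ContinuousLinearMap.fst ℝ E F).intervalIntegral_comp_comm hf).symm

section IsothermalGauge

variable {c v : ℝ → ℝ × ℝ}

theorem gammaIG_eq_dAlembert (hv : Continuous v) :
    gammaIG c v =
      dAlembert ((1 / 2 : ℝ) • (c + antideriv v)) ((1 / 2 : ℝ) • (c - antideriv v)) := by
  funext p
  have h : antideriv v (p.1 + p.2) - antideriv v (p.1 - p.2) =
      ∫ ζ in (p.1 - p.2)..(p.1 + p.2), v ζ :=
    intervalIntegral.integral_interval_sub_left (hv.intervalIntegrable _ _)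
      (hv.intervalIntegrable _ _)
  simp only [gammaIG, dAlembert, Pi.smul_apply, Pi.add_apply, Pi.sub_apply, ← h]
  module

theorem gammaIG_zero_time (s : ℝ) : gammaIG c v (s, 0) = c s := by
  simp only [gammaIG, add_zero, sub_zero, intervalIntegral.integral_same]
  module

theorem hasDerivAt_half_add_antideriv (hc : Differentiable ℝ c) (hv : Continuous v) (x : ℝ) :
    HasDerivAt ((1 / 2 : ℝ) • (c + antideriv v)) ((1 / 2 : ℝ) • aplus c v x) x := by
  rw [aplus, add_comm (v x)]
  exact ((hc x).hasDerivAt.add (hasDerivAt_antideriv hv x)).const_smul (1 / 2 : ℝ)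

theorem hasDerivAt_half_sub_antideriv (hc : Differentiable ℝ c) (hv : Continuous v) (x : ℝ) :
    HasDerivAt ((1 / 2 : ℝ) • (c - antideriv v)) (-((1 / 2 : ℝ) • aminus c v x)) x := by
  rw [aminus, ← smul_neg, neg_sub]
  exact ((hc x).hasDerivAt.sub (hasDerivAt_antideriv hv x)).const_smul (1 / 2 : ℝ)

theorem deriv_half_add_antideriv (hc : Differentiable ℝ c) (hv : Continuous v) :
    deriv ((1 / 2 : ℝ) • (c + antideriv v)) = (1 / 2 : ℝ) • aplus c v :=
  funext fun x => (hasDerivAt_half_add_antideriv hc hv x).deriv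

theorem deriv_half_sub_antideriv (hc : Differentiable ℝ c) (hv : Continuous v) :
    deriv ((1 / 2 : ℝ) • (c - antideriv v)) = -((1 / 2 : ℝ) • aminus c v) :=
  funext fun x => (hasDerivAt_half_sub_antideriv hc hv x).deriv

theorem pds_gammaIG (hc : Differentiable ℝ c) (hv : Continuous v) :
    pds (gammaIG c v) = dAlembert ((1 / 2 : ℝ) • aplus c v) (-((1 / 2 : ℝ) • aminus c v)) := by
  rw [gammaIG_eq_dAlembert hv,
    pds_dAlembert (fun x => (hasDerivAt_half_add_antideriv hc hv x).differentiableAt)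
      (fun x => (hasDerivAt_half_sub_antideriv hc hv x).differentiableAt),
    deriv_half_add_antideriv hc hv, deriv_half_sub_antideriv hc hv]

theorem pdt_gammaIG (hc : Differentiable ℝ c) (hv : Continuous v) :
    pdt (gammaIG c v) = dAlembert ((1 / 2 : ℝ) • aplus c v) ((1 / 2 : ℝ) • aminus c v) := by
  rw [gammaIG_eq_dAlembert hv,
    pdt_dAlembert (fun x => (hasDerivAt_half_add_antideriv hc hv x).differentiableAt)
      (fun x => (hasDerivAt_half_sub_antideriv hc hv x).differentiableAt),
    deriv_half_add_antideriv hc hv, deriv_half_sub_antideriv hc hv, neg_neg]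

theorem pdtt_gammaIG (hc : Differentiable ℝ c) (hc' : Differentiable ℝ (deriv c))
    (hv : Differentiable ℝ v) : pdtt (gammaIG c v) = pdss (gammaIG c v) := by
  rw [gammaIG_eq_dAlembert hv.continuous]
  apply pdtt_dAlembert
    (fun x => (hasDerivAt_half_add_antideriv hc hv.continuous x).differentiableAt)
    (fun x => (hasDerivAt_half_sub_antideriv hc hv.continuous x).differentiableAt)
  · rw [deriv_half_add_antideriv hc hv.continuous]
    exact (hv.add hc').const_smul _
  · rw [deriv_half_sub_antideriv hc hv.continuous]
    exact ((hv.sub hc').const_smul _).neg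

theorem nsq_aplus {s : ℝ} (horth : dot2 (deriv c s) (v s) = 0)
    (hnorm : nsq (deriv c s) + nsq (v s) = 1) : nsq (aplus c v s) = 1 := by
  simp only [nsq, dot2, aplus, Prod.fst_add, Prod.snd_add] at *
  linear_combination hnorm + 2 * horth

theorem nsq_aminus {s : ℝ} (horth : dot2 (deriv c s) (v s) = 0)
    (hnorm : nsq (deriv c s) + nsq (v s) = 1) : nsq (aminus c v s) = 1 := by
  simp only [nsq, dot2, aminus, Prod.fst_sub, Prod.snd_sub] at *
  linear_combination hnorm - 2 * horth

theorem gammaIG_conformal (hc : Differentiable ℝ c) (hv : Continuous v)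
    (horth : ∀ s, dot2 (deriv c s) (v s) = 0) (hnorm : ∀ s, nsq (deriv c s) + nsq (v s) = 1)
    (p : ℝ × ℝ) :
    nsq (pds (gammaIG c v) p) + nsq (pdt (gammaIG c v) p) = 1 ∧
      dot2 (pds (gammaIG c v) p) (pdt (gammaIG c v) p) = 0 := by
  have hplus := nsq_aplus (horth (p.1 + p.2)) (hnorm (p.1 + p.2))
  have hminus := nsq_aminus (horth (p.1 - p.2)) (hnorm (p.1 - p.2))
  rw [pds_gammaIG hc hv, pdt_gammaIG hc hv]
  simp only [nsq, dot2, dAlembert, Pi.smul_apply, Pi.neg_apply, Prod.fst_add, Prod.snd_add,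
    Prod.fst_neg, Prod.snd_neg, Prod.smul_fst, Prod.smul_snd, smul_eq_mul] at *
  constructor
  · linear_combination (1 / 2 : ℝ) * hplus + (1 / 2 : ℝ) * hminus
  · linear_combination (1 / 4 : ℝ) * hplus - (1 / 4 : ℝ) * hminus

theorem contDiff_gammaIG {n : ℕ∞} (hc : ContDiff ℝ n c) (hv : ContDiff ℝ n v) :
    ContDiff ℝ n (gammaIG c v) := by
  rw [gammaIG_eq_dAlembert hv.continuous]
  exact ((hc.add (contDiff_antideriv hv)).const_smul (1 / 2 : ℝ)).dAlembert
    ((hc.sub (contDiff_antideriv hv)).const_smul (1 / 2 : ℝ))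

end IsothermalGauge

theorem nsq_pos_of_ne_zero {a : ℝ × ℝ} (ha : a ≠ 0) : 0 < nsq a := by
  rcases a with ⟨x, y⟩
  have hxy : x ≠ 0 ∨ y ≠ 0 := by
    by_contra! h
    exact ha (Prod.ext h.1 h.2)
  simp only [nsq, dot2]
  rcases hxy with hx | hy
  · nlinarith [mul_self_pos.2 hx, mul_self_nonneg y]
  · nlinarith [mul_self_pos.2 hy, mul_self_nonneg x]

theorem timelike_of_conformal {a b : ℝ × ℝ} (hnorm : nsq a + nsq b = 1) (horth : dot2 a b = 0)
    (ha : a ≠ 0) : nsq a * (nsq b - 1) - dot2 a b ^ 2 < 0 := by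
  have hb : nsq b - 1 = -nsq a := by linarith
  rw [hb, horth]
  nlinarith [nsq_pos_of_ne_zero ha]

theorem isProperMap_time_mean {f : ℝ → ℝ} (hf : Continuous f) (htop : Tendsto f atTop atTop)
    (hbot : Tendsto f atBot atBot) :
    IsProperMap (fun p : ℝ × ℝ => (p.2, (f (p.1 + p.2) + f (p.1 - p.2)) / 2)) := by
  have hcont : Continuous (fun p : ℝ × ℝ => (p.2, (f (p.1 + p.2) + f (p.1 - p.2)) / 2)) := by
    fun_prop
  refine isProperMap_iff_isCompact_preimage.2 ⟨hcont, fun K hK => ?_⟩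
  obtain ⟨R, hR⟩ := hK.isBounded.subset_closedBall 0
  obtain ⟨M, hM⟩ := (htop.eventually_gt_atTop R).exists_forall_of_atTop
  obtain ⟨M', hM'⟩ := (hbot.eventually_lt_atBot (-R)).exists_forall_of_atBot
  refine ((isCompact_Icc (a := M' - R) (b := M + R)).prod (isCompact_Icc (a := -R) (b := R)))
    |>.of_isClosed_subset (hK.isClosed.preimage hcont) fun p hp => ?_
  have hp' := mem_closedBall_zero_iff.1 (hR hp)
  have ht := abs_le.1 ((norm_fst_le _).trans hp')
  have hmean := abs_le.1 ((norm_snd_le _).trans hp')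
  refine ⟨⟨?_, ?_⟩, ht⟩
  · by_contra! h
    linarith [hM' (p.1 + p.2) (by linarith), hM' (p.1 - p.2) (by linarith)]
  · by_contra! h
    linarith [hM (p.1 + p.2) (by linarith), hM (p.1 - p.2) (by linarith)]

section StraightLine

variable {c1 v2 : ℝ → ℝ}

theorem deriv_straightLine (hc1 : Differentiable ℝ c1) (s : ℝ) :
    deriv (fun s => ((c1 s, 0) : ℝ × ℝ)) s = (deriv c1 s, 0) :=
  ((hc1 s).hasDerivAt.prodMk (hasDerivAt_const s 0)).deriv

theorem dot2_deriv_straightLine (hc1 : Differentiable ℝ c1) (s : ℝ) :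
    dot2 (deriv (fun s => ((c1 s, 0) : ℝ × ℝ)) s) (0, v2 s) = 0 := by
  simp [deriv_straightLine hc1, dot2]

theorem nsq_deriv_straightLine_add (hc1 : Differentiable ℝ c1) {s : ℝ}
    (hconstraint : deriv c1 s ^ 2 + v2 s ^ 2 = 1) :
    nsq (deriv (fun s => ((c1 s, 0) : ℝ × ℝ)) s) + nsq (0, v2 s) = 1 := by
  simp only [deriv_straightLine hc1, nsq, dot2, mul_zero, add_zero, zero_add, ← hconstraint]
  ring

theorem fst_pds_gammaIG_straightLine_pos (hc1 : Differentiable ℝ c1) (hv2 : Continuous v2)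
    (hpos : ∀ s, 0 < deriv c1 s) (p : ℝ × ℝ) :
    0 < (pds (gammaIG (fun s => (c1 s, 0)) (fun s => (0, v2 s))) p).1 := by
  rw [pds_gammaIG (hc1.prodMk (differentiable_const 0)) (continuous_const.prodMk hv2)]
  simp only [dAlembert, aplus, aminus, deriv_straightLine hc1, Pi.smul_apply, Pi.neg_apply,
    Prod.mk_add_mk, Prod.mk_sub_mk, Prod.smul_mk, Prod.neg_mk, smul_eq_mul]
  linarith [hpos (p.1 + p.2), hpos (p.1 - p.2)]

theorem fst_gammaIG_straightLine (hv2 : Continuous v2) (p : ℝ × ℝ) :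
    (gammaIG (fun s => (c1 s, 0)) (fun s => (0, v2 s)) p).1 =
      (c1 (p.1 + p.2) + c1 (p.1 - p.2)) / 2 := by
  have hv : Continuous fun s => ((0 : ℝ), v2 s) := continuous_const.prodMk hv2
  simp only [gammaIG, Prod.smul_fst, Prod.fst_add, smul_eq_mul,
    fst_intervalIntegral (hv.intervalIntegrable _ _), intervalIntegral.integral_zero]
  ring

theorem isProperMap_straightLine (hc1 : Continuous c1) (hv2 : Continuous v2)
    (htop : Tendsto c1 atTop atTop) (hbot : Tendsto c1 atBot atBot) :
    IsProperMap (fun p : ℝ × ℝ =>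
      ((p.2, gammaIG (fun s => (c1 s, 0)) (fun s => (0, v2 s)) p) : ℝ × ℝ × ℝ)) := by
  have hγ : Continuous (gammaIG (fun s => (c1 s, 0)) (fun s => (0, v2 s))) :=
    contDiff_zero.1 (contDiff_gammaIG (n := 0) (contDiff_zero.2 (hc1.prodMk continuous_const))
      (contDiff_zero.2 (continuous_const.prodMk hv2)))
  refine isProperMap_of_comp_of_t2 (g := fun q : ℝ × ℝ × ℝ => (q.1, q.2.1))
    (continuous_snd.prodMk hγ) (by fun_prop) ?_
  convert isProperMap_time_mean hc1 htop hbot using 2 with p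
  exact congrArg (Prod.mk p.2) (fst_gammaIG_straightLine hv2 p)

end StraightLine

/-- The evolution by isothermal gauge of a straight line, with any
smooth admissible velocity, never becomes singular: it is a smooth proper timelike
immersion with vanishing mean curvature whose image contains the line. -/
theorem straight_line_global_evolution
    (c1 v2 : ℝ → ℝ)
    (hc1 : ContDiff ℝ ∞ c1) (hv2 : ContDiff ℝ ∞ v2)
    (hpos : ∀ s : ℝ, 0 < deriv c1 s)
    (htop : Tendsto c1 atTop atTop) (hbot : Tendsto c1 atBot atBot)
    (hconstraint : ∀ s : ℝ, (deriv c1 s) ^ 2 + (v2 s) ^ 2 = 1)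
    (c v : ℝ → ℝ × ℝ)
    (hc : c = fun s => ((c1 s, 0) : ℝ × ℝ))
    (hv : v = fun s => ((0, v2 s) : ℝ × ℝ)) :
    (∀ p : ℝ × ℝ, pds (gammaIG c v) p ≠ 0) ∧
    ContDiff ℝ ∞ (fun p : ℝ × ℝ => ((p.2, gammaIG c v p) : ℝ × ℝ × ℝ)) ∧
    IsProperMap (fun p : ℝ × ℝ => ((p.2, gammaIG c v p) : ℝ × ℝ × ℝ)) ∧
    (∀ p : ℝ × ℝ,
      nsq (pds (gammaIG c v) p) * (nsq (pdt (gammaIG c v) p) - 1) -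
        (dot2 (pds (gammaIG c v) p) (pdt (gammaIG c v) p)) ^ 2 < 0) ∧
    (∀ p : ℝ × ℝ, pdtt (gammaIG c v) p = pdss (gammaIG c v) p) ∧
    ∀ x : ℝ, ((0 : ℝ), (x : ℝ), (0 : ℝ)) ∈
      Set.range (fun p : ℝ × ℝ => ((p.2, gammaIG c v p) : ℝ × ℝ × ℝ)) := by
  subst hc hv
  have hc1d : Differentiable ℝ c1 := hc1.differentiable (by simp)
  have hcs : ContDiff ℝ ∞ (fun s => ((c1 s, 0) : ℝ × ℝ)) := hc1.prodMk contDiff_const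
  have hvs : ContDiff ℝ ∞ (fun s => ((0, v2 s) : ℝ × ℝ)) := contDiff_const.prodMk hv2
  have hne : ∀ p, pds (gammaIG (fun s => (c1 s, 0)) (fun s => (0, v2 s))) p ≠ 0 := fun p h =>
    (fst_pds_gammaIG_straightLine_pos hc1d hv2.continuous hpos p).ne' (by rw [h]; rfl)
  refine ⟨hne, contDiff_snd.prodMk (contDiff_gammaIG hcs hvs),
    isProperMap_straightLine hc1.continuous hv2.continuous htop hbot, fun p => ?_,
    fun p => ?_, fun x => ?_⟩
  · obtain ⟨hnorm, horth⟩ := gammaIG_conformal (hcs.differentiable (by simp)) hvs.continuous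
      (dot2_deriv_straightLine hc1d) (fun s => nsq_deriv_straightLine_add hc1d (hconstraint s)) p
    exact timelike_of_conformal hnorm horth (hne p)
  · exact congrFun (pdtt_gammaIG (hcs.differentiable (by simp))
      ((contDiff_infty_iff_deriv.1 hcs).2.differentiable (by simp))
      (hvs.differentiable (by simp))) p
  · obtain ⟨s, hs⟩ := hc1.continuous.surjective htop hbot x
    exact ⟨(s, 0), by simp [gammaIG_zero_time, hs]⟩
end
end
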